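/- Under the stated setup with equal eigenvalues λ₁ = λ₂ = λ, 0 < |λ| < 1, one has lim_{h→∞} CD⁻(h)/(h·λʰ) = α·D₃; equivalently, the cross-codifference CD(X₁(t),X₂(t−h)) is asymptotically α·D₃·h·λʰ as h → ∞. -/

import Mathlib

open MeasureTheory Filter Topology

/-- The signed power `x^⟨p⟩ = |x|^p · sign x`. -/
noncomputable def spow (x p : ℝ) : ℝ := |x| ^ p * Real.sign x

/-- The unit sphere `S₂ ⊆ ℝ²`. -/
abbrev Sphere2 : Type := {s : ℝ × ℝ // s.1 ^ 2 + s.2 ^ 2 = 1}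

noncomputable def A2 (a1 a2 a3 a4 l : ℝ) (j : ℕ) (s : Sphere2) : ℝ :=
  (j : ℝ) * l ^ ((j : ℤ) - 1) * a1 * s.1.1 - (j : ℝ) * l ^ j * s.1.1 + l ^ j * s.1.1
    + (j : ℝ) * l ^ ((j : ℤ) - 1) * a2 * s.1.2

noncomputable def B2 (a1 a2 a3 a4 l : ℝ) (j : ℕ) (s : Sphere2) : ℝ :=
  l ^ ((j : ℤ) - 1) * a1 * s.1.1 - l ^ j * s.1.1 + l ^ ((j : ℤ) - 1) * a2 * s.1.2

noncomputable def C2 (a1 a2 a3 a4 l : ℝ) (j : ℕ) (s : Sphere2) : ℝ :=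
  (j : ℝ) * l ^ ((j : ℤ) - 1) * a3 * s.1.1 + (j : ℝ) * l ^ ((j : ℤ) - 1) * a4 * s.1.2
    - (j : ℝ) * l ^ j * s.1.2 + l ^ j * s.1.2

/-- The cross-codifference `CD(X₁(t), X₂(t-h))` in the double-eigenvalue case. -/
noncomputable def CDneg' (Γ : Measure Sphere2) (α a1 a2 a3 a4 l : ℝ) (h : ℕ) : ℝ :=
  ∑' j : ℕ, ∫ s,
    (|l ^ h * A2 a1 a2 a3 a4 l j s + (h : ℝ) * l ^ h * B2 a1 a2 a3 a4 l j s| ^ α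
      + |C2 a1 a2 a3 a4 l j s| ^ α
      - |C2 a1 a2 a3 a4 l j s - (l ^ h * A2 a1 a2 a3 a4 l j s + (h : ℝ) * l ^ h * B2 a1 a2 a3 a4 l j s)| ^ α) ∂Γ

/-- The cross-covariation `CV(X₁(t), X₂(t-h))` in the double-eigenvalue case. -/
noncomputable def CVneg' (Γ : Measure Sphere2) (α a1 a2 a3 a4 l : ℝ) (h : ℕ) : ℝ :=
  ∑' j : ℕ, ∫ s,
    spow (C2 a1 a2 a3 a4 l j s) (α - 1) * (l ^ h * A2 a1 a2 a3 a4 l j s + (h : ℝ) * l ^ h * B2 a1 a2 a3 a4 l j s) ∂Γ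

noncomputable def E3 (Γ : Measure Sphere2) (α a1 a2 a3 a4 l : ℝ) : ℝ :=
  ∑' j : ℕ, ∫ s, A2 a1 a2 a3 a4 l j s * spow (C2 a1 a2 a3 a4 l j s) (α - 1) ∂Γ

noncomputable def D3 (Γ : Measure Sphere2) (α a1 a2 a3 a4 l : ℝ) : ℝ :=
  ∑' j : ℕ, ∫ s, B2 a1 a2 a3 a4 l j s * spow (C2 a1 a2 a3 a4 l j s) (α - 1) ∂Γ

lemma spow_zero (p : ℝ) : spow 0 p = 0 := by simp [spow]

lemma spow_nonneg_eq {x : ℝ} (hx : 0 ≤ x) (p : ℝ) (hp : 0 < p) : spow x p = x ^ p := by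
  rcases eq_or_lt_of_le hx with h | h
  · simp [spow, ← h, Real.zero_rpow hp.ne']
  · simp [spow, abs_of_pos h, Real.sign_of_pos h]

lemma spow_neg_neg (x p : ℝ) : spow (-x) p = - spow x p := by
  rcases lt_trichotomy x 0 with h | rfl | h
  · simp [spow, abs_of_neg h, abs_of_pos (neg_pos.2 h), Real.sign_of_neg h,
      Real.sign_of_pos (neg_pos.2 h)]
  · simp [spow]
  · simp [spow, abs_of_pos h, abs_of_neg (neg_neg_iff_pos.2 h), Real.sign_of_pos h,
      Real.sign_of_neg (neg_neg_iff_pos.2 h)]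

lemma abs_spow_le (x p : ℝ) : |spow x p| ≤ |x| ^ p := by
  have h0 : (0:ℝ) ≤ |x| ^ p := Real.rpow_nonneg (abs_nonneg x) p
  rw [spow, abs_mul, abs_of_nonneg h0]
  rcases Real.sign_apply_eq x with h | h | h <;> rw [h] <;> [skip; skip; skip] <;> simp [h0] <;> norm_num

lemma real_rpow_add_le {a b p : ℝ} (ha : 0 ≤ a) (hb : 0 ≤ b) (hp : 0 ≤ p) (hp1 : p ≤ 1) :
    (a + b) ^ p ≤ a ^ p + b ^ p := by
  lift a to NNReal using ha
  lift b to NNReal using hb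
  exact_mod_cast NNReal.rpow_add_le_add_rpow a b hp hp1

lemma rpow_sub_rpow_le {x y p : ℝ} (hy : 0 ≤ y) (hyx : y ≤ x) (hp : 0 ≤ p) (hp1 : p ≤ 1) :
    x ^ p - y ^ p ≤ (x - y) ^ p := by
  have h := real_rpow_add_le (sub_nonneg.2 hyx) hy hp hp1
  rw [sub_add_cancel] at h
  linarith

lemma spow_sub_spow_le {p : ℝ} (hp0 : 0 < p) (hp1 : p ≤ 1) (x y : ℝ) :
    |spow x p - spow y p| ≤ 2 * |x - y| ^ p := by
  -- reduce symmetry to y ≤ x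
  wlog hxy : y ≤ x generalizing x y
  · rw [abs_sub_comm, abs_sub_comm x y]; exact this _ _ (le_of_not_ge hxy)
  have key : ∀ u v : ℝ, 0 ≤ v → v ≤ u → |spow u p - spow v p| ≤ 2 * |u - v| ^ p := by
    intro u v hv huv
    rw [spow_nonneg_eq (hv.trans huv) p hp0, spow_nonneg_eq hv p hp0,
      abs_of_nonneg (by
        have := Real.rpow_le_rpow hv huv hp0.le
        linarith), abs_of_nonneg (by linarith)]
    have h := rpow_sub_rpow_le hv huv hp0.le hp1
    nlinarith [Real.rpow_nonneg (sub_nonneg.2 huv) p]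
  rcases le_or_gt 0 y with hy | hy
  · exact key x y hy hxy
  rcases le_or_gt 0 x with hx | hx
  · -- y < 0 ≤ x
    have h1 : spow x p = x ^ p := spow_nonneg_eq hx p hp0
    have h2 : spow y p = -((-y) ^ p) := by
      have h5 := spow_neg_neg (-y) p
      rw [neg_neg] at h5
      rw [h5, spow_nonneg_eq (by linarith : (0:ℝ) ≤ -y) p hp0]
    rw [h1, h2, sub_neg_eq_add]
    have hxp : x ^ p ≤ (x - y) ^ p := Real.rpow_le_rpow hx (by linarith) hp0.le
    have hyp : (-y) ^ p ≤ (x - y) ^ p := Real.rpow_le_rpow (by linarith) (by linarith) hp0.le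
    have h3 : (0:ℝ) ≤ x ^ p := Real.rpow_nonneg hx p
    have h4 : (0:ℝ) ≤ (-y) ^ p := Real.rpow_nonneg (by linarith) p
    rw [abs_of_nonneg (by linarith), abs_of_nonneg (by linarith)]
    linarith
  · -- x < 0, y < 0
    have h := key (-y) (-x) (by linarith) (by linarith)
    have hx5 := spow_neg_neg (-x) p
    have hy5 := spow_neg_neg (-y) p
    rw [neg_neg] at hx5 hy5
    rw [hx5, hy5]
    have habs : |x - y| = |(-y) - (-x)| := by rw [show (-y) - (-x) = x - y by ring]
    rw [habs]
    calc |(- spow (-x) p) - (- spow (-y) p)| = |spow (-y) p - spow (-x) p| := by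
          rw [show (- spow (-x) p) - (- spow (-y) p) = -(spow (-x) p - spow (-y) p) by ring,
            abs_neg, abs_sub_comm]
      _ ≤ 2 * |(-y) - (-x)| ^ p := h

lemma hasDerivAt_spow' {α : ℝ} (hα : 1 < α) (x : ℝ) :
    HasDerivAt (fun t : ℝ => |t| ^ α) (α * spow x (α - 1)) x := by
  have h := hasDerivAt_abs_rpow x hα
  convert h using 1
  rcases eq_or_ne x 0 with rfl | hx
  · simp [spow]
  · have h1 : |x| ^ (α - 2) * x = spow x (α - 1) := by
      rcases lt_or_gt_of_ne hx with h2 | h2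
      · have hx' : (0:ℝ) < -x := by linarith
        rw [spow, Real.sign_of_neg h2, abs_of_neg h2]
        rw [show (-x) ^ (α - 2) * x = -((-x) ^ (α - 2) * (-x)) by ring,
          ← Real.rpow_add_one (ne_of_gt hx') (α - 2),
          show α - 2 + 1 = α - 1 by ring]
        ring
      · rw [spow, Real.sign_of_pos h2, abs_of_pos h2, mul_one,
          ← Real.rpow_add_one (by linarith : x ≠ 0) (α - 2),
          show α - 2 + 1 = α - 1 by ring]
    rw [mul_assoc, h1]

lemma abs_rpow_taylor {α : ℝ} (hα1 : 1 < α) (hα2 : α < 2) (c e : ℝ) :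
    abs (|c| ^ α - |c - e| ^ α - α * spow c (α - 1) * e) ≤ 2 * α * |e| ^ α := by
  rcases eq_or_ne e 0 with rfl | he
  · simp [Real.zero_rpow (by linarith : α ≠ 0)]
  have habs : (0:ℝ) < |e| := abs_pos.2 he
  set g : ℝ → ℝ := fun t => |t| ^ α - α * spow c (α - 1) * t with hg
  have hderiv : ∀ t : ℝ, HasDerivAt g (α * spow t (α - 1) - α * spow c (α - 1)) t := by
    intro t
    have h2 : HasDerivAt (fun t : ℝ => α * spow c (α - 1) * t) (α * spow c (α - 1)) t := by
      simpa using (hasDerivAt_id t).const_mul (α * spow c (α - 1))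
    exact (hasDerivAt_spow' hα1 t).sub h2
  set S := segment ℝ (c - e) c with hS
  have hmem : ∀ t ∈ S, |t - c| ≤ |e| := by
    intro t ht
    obtain ⟨a, b, ha, hb, hab, rfl⟩ := ht
    have : a • (c - e) + b • c - c = -(a * e) := by
      simp only [smul_eq_mul]
      rw [show b = 1 - a by linarith]
      ring
    rw [this, abs_neg, abs_mul]
    calc |a| * |e| ≤ 1 * |e| := by
          apply mul_le_mul_of_nonneg_right _ (abs_nonneg e)
          rw [abs_of_nonneg ha]; linarith
      _ = |e| := one_mul _
  have hbound : ∀ t ∈ S, ‖α * spow t (α - 1) - α * spow c (α - 1)‖ ≤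
      α * (2 * |e| ^ (α - 1)) := by
    intro t ht
    rw [Real.norm_eq_abs, show α * spow t (α - 1) - α * spow c (α - 1)
      = α * (spow t (α - 1) - spow c (α - 1)) by ring, abs_mul,
      abs_of_pos (by linarith : (0:ℝ) < α)]
    apply mul_le_mul_of_nonneg_left _ (by linarith : (0:ℝ) ≤ α)
    calc |spow t (α - 1) - spow c (α - 1)| ≤ 2 * |t - c| ^ (α - 1) :=
          spow_sub_spow_le (by linarith) (by linarith) t c
      _ ≤ 2 * |e| ^ (α - 1) := by
          apply mul_le_mul_of_nonneg_left _ (by norm_num)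
          exact Real.rpow_le_rpow (abs_nonneg _) (hmem t ht) (by linarith)
  have hmvt := Convex.norm_image_sub_le_of_norm_hasDerivWithin_le
    (f := g) (f' := fun t => α * spow t (α - 1) - α * spow c (α - 1))
    (fun t _ => (hderiv t).hasDerivWithinAt) hbound (convex_segment _ _)
    (left_mem_segment ℝ (c - e) c) (right_mem_segment ℝ (c - e) c)
  have hval : g c - g (c - e) = |c| ^ α - |c - e| ^ α - α * spow c (α - 1) * e := by
    simp only [hg]; ring
  rw [Real.norm_eq_abs, hval, Real.norm_eq_abs, show c - (c - e) = e by ring] at hmvt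
  calc abs (|c| ^ α - |c - e| ^ α - α * spow c (α - 1) * e)
      ≤ α * (2 * |e| ^ (α - 1)) * |e| := hmvt
    _ = 2 * α * |e| ^ α := by
        rw [show α * (2 * |e| ^ (α - 1)) * |e| = 2 * α * (|e| ^ (α - 1) * |e|) by ring]
        congr 1
        rw [← Real.rpow_add_one (abs_ne_zero.2 he) (α - 1)]
        ring_nf

lemma key_est {α l : ℝ} (hα1 : 1 < α) (hα2 : α < 2) (hl : l ≠ 0)
    (A B C P M1 : ℝ) (hA : |A| ≤ P) (hB : |B| ≤ P) (hC : |C| ≤ P)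
    (hP : 0 < P) (h : ℕ) (hh : 1 ≤ h)
    (hM1 : ((h : ℝ) * |l| ^ h) ^ (α - 1) ≤ M1) :
    |(|l ^ h * A + (h : ℝ) * l ^ h * B| ^ α + |C| ^ α
        - |C - (l ^ h * A + (h : ℝ) * l ^ h * B)| ^ α) / ((h : ℝ) * l ^ h)|
      ≤ α * P ^ (α - 1) * (2 * P) + (1 + 2 * α) * M1 * (2 * P) ^ α := by
  set e := l ^ h * A + (h : ℝ) * l ^ h * B with he
  set d := (h : ℝ) * l ^ h with hdd
  have hh' : (1 : ℝ) ≤ (h : ℝ) := by exact_mod_cast hh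
  have hd : d ≠ 0 := by
    apply mul_ne_zero (by positivity) (pow_ne_zero _ hl)
  have hdabs : |d| = (h : ℝ) * |l| ^ h := by
    rw [hdd, abs_mul, abs_pow, Nat.abs_cast]
  have hd0 : 0 < |d| := abs_pos.2 hd
  have htay := abs_rpow_taylor hα1 hα2 C e
  set N := |e| ^ α + |C| ^ α - |C - e| ^ α with hN
  have hsplit : N / d = α * spow C (α - 1) * e / d + (N - α * spow C (α - 1) * e) / d := by
    field_simp
    ring
  have heabs : |e| ≤ |d| * (2 * P) := by
    have h1 : |e| ≤ |l ^ h| * |A| + |d| * |B| := by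
      calc |e| ≤ |l ^ h * A| + |(h : ℝ) * l ^ h * B| := abs_add_le _ _
        _ = |l ^ h| * |A| + |d| * |B| := by rw [abs_mul, abs_mul]
    have h2 : |l ^ h| ≤ |d| := by
      rw [hdabs, abs_pow]
      nlinarith [pow_nonneg (abs_nonneg l) h]
    calc |e| ≤ |l ^ h| * |A| + |d| * |B| := h1
      _ ≤ |d| * P + |d| * P := by
          apply add_le_add
          · exact mul_le_mul h2 hA (abs_nonneg _) (abs_nonneg _)
          · exact mul_le_mul_of_nonneg_left hB (abs_nonneg _)
      _ = |d| * (2 * P) := by ring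
  have hrem : |N - α * spow C (α - 1) * e| ≤ (1 + 2 * α) * |e| ^ α := by
    have : N - α * spow C (α - 1) * e
        = |e| ^ α + (|C| ^ α - |C - e| ^ α - α * spow C (α - 1) * e) := by rw [hN]; ring
    rw [this]
    calc |_ + _| ≤ |(|e| ^ α)| + |(|C| ^ α - |C - e| ^ α - α * spow C (α - 1) * e)| :=
          abs_add_le _ _
      _ ≤ |e| ^ α + 2 * α * |e| ^ α := by
          apply add_le_add _ htay
          rw [abs_of_nonneg (Real.rpow_nonneg (abs_nonneg e) α)]
      _ = (1 + 2 * α) * |e| ^ α := by ring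
  have heα : |e| ^ α ≤ |d| ^ α * (2 * P) ^ α := by
    rw [← Real.mul_rpow (abs_nonneg d) (by positivity)]
    exact Real.rpow_le_rpow (abs_nonneg e) heabs (by linarith)
  have hterm2 : |(N - α * spow C (α - 1) * e) / d| ≤ (1 + 2 * α) * M1 * (2 * P) ^ α := by
    rw [abs_div]
    rw [div_le_iff₀ hd0]
    have hM1' : |d| ^ (α - 1) ≤ M1 := by rwa [hdabs]
    calc |N - α * spow C (α - 1) * e| ≤ (1 + 2 * α) * (|d| ^ α * (2 * P) ^ α) := by
          refine hrem.trans ?_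
          apply mul_le_mul_of_nonneg_left heα (by linarith)
      _ = (1 + 2 * α) * |d| ^ (α - 1) * (2 * P) ^ α * |d| := by
          rw [Real.rpow_sub_one (ne_of_gt hd0)]
          field_simp
      _ ≤ (1 + 2 * α) * M1 * (2 * P) ^ α * |d| := by
          apply mul_le_mul_of_nonneg_right _ (abs_nonneg d)
          have hM10 : 0 ≤ (2 * P) ^ α := Real.rpow_nonneg (by positivity) α
          have h9 : (0:ℝ) ≤ 1 + 2 * α := by linarith
          nlinarith [mul_le_mul_of_nonneg_right hM1' hM10]
  have hterm1 : |α * spow C (α - 1) * e / d| ≤ α * P ^ (α - 1) * (2 * P) := by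
    rw [abs_div, abs_mul, abs_mul, abs_of_pos (by linarith : (0:ℝ) < α)]
    rw [div_le_iff₀ hd0]
    have h1 : |spow C (α - 1)| ≤ P ^ (α - 1) :=
      (abs_spow_le C (α - 1)).trans (Real.rpow_le_rpow (abs_nonneg C) hC (by linarith))
    have h2 : |e| ≤ (2 * P) * |d| := by rw [mul_comm]; exact heabs
    calc α * |spow C (α - 1)| * |e| ≤ α * P ^ (α - 1) * ((2 * P) * |d|) := by
          apply mul_le_mul _ h2 (abs_nonneg e) _
          · apply mul_le_mul_of_nonneg_left h1 (by linarith)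
          · positivity
      _ = α * P ^ (α - 1) * (2 * P) * |d| := by ring
  calc |N / d| ≤ |α * spow C (α - 1) * e / d| + |(N - α * spow C (α - 1) * e) / d| := by
        rw [hsplit]; exact abs_add_le _ _
    _ ≤ α * P ^ (α - 1) * (2 * P) + (1 + 2 * α) * M1 * (2 * P) ^ α :=
        add_le_add hterm1 hterm2

lemma key_tendsto {α l : ℝ} (hα1 : 1 < α) (hα2 : α < 2) (hl : l ≠ 0) (hr1 : |l| < 1)
    (A B C : ℝ) :
    Tendsto (fun h : ℕ => (|l ^ h * A + (h : ℝ) * l ^ h * B| ^ α + |C| ^ α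
        - |C - (l ^ h * A + (h : ℝ) * l ^ h * B)| ^ α) / ((h : ℝ) * l ^ h)) atTop
      (𝓝 (α * spow C (α - 1) * B)) := by
  set e : ℕ → ℝ := fun h => l ^ h * A + (h : ℝ) * l ^ h * B with he
  set d : ℕ → ℝ := fun h => (h : ℝ) * l ^ h with hdd
  set N : ℕ → ℝ := fun h => |e h| ^ α + |C| ^ α - |C - e h| ^ α with hN
  have hd : ∀ h : ℕ, 1 ≤ h → d h ≠ 0 := by
    intro h hh
    have : (0:ℝ) < (h : ℝ) := by exact_mod_cast hh
    exact mul_ne_zero (ne_of_gt this) (pow_ne_zero _ hl)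
  -- part 1 : main term
  have T1 : Tendsto (fun h : ℕ => α * spow C (α - 1) * (A / (h : ℝ) + B)) atTop
      (𝓝 (α * spow C (α - 1) * B)) := by
    have := (tendsto_const_div_atTop_nhds_zero_nat A).add (tendsto_const_nhds (x := B))
    rw [zero_add] at this
    exact this.const_mul _
  -- part 2 : remainder
  have T2 : Tendsto (fun h : ℕ => (N h - α * spow C (α - 1) * e h) / d h) atTop (𝓝 0) := by
    have hb : Tendsto (fun h : ℕ => (1 + 2 * α) * (|A| + |B|) ^ α *
        ((h : ℝ) * |l| ^ h) ^ (α - 1)) atTop (𝓝 0) := by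
      have h1 : Tendsto (fun h : ℕ => (h : ℝ) * |l| ^ h) atTop (𝓝 0) := by
        have := tendsto_pow_const_mul_const_pow_of_lt_one 1 (abs_nonneg l) hr1
        simpa using this
      have h2 : Tendsto (fun x : ℝ => x ^ (α - 1)) (𝓝 0) (𝓝 0) := by
        have h3 := (Real.continuousAt_rpow_const 0 (α - 1) (Or.inr (by linarith))).tendsto
        rwa [Real.zero_rpow (by linarith : α - 1 ≠ 0)] at h3
      have := (h2.comp h1).const_mul ((1 + 2 * α) * (|A| + |B|) ^ α)
      simpa using this
    apply squeeze_zero_norm' _ hb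
    filter_upwards [eventually_ge_atTop 1] with h hh
    have hd' := hd h hh
    have hh' : (1:ℝ) ≤ (h : ℝ) := by exact_mod_cast hh
    have hdabs : |d h| = (h : ℝ) * |l| ^ h := by
      simp only [hdd, abs_mul, abs_pow, Nat.abs_cast]
    have hd0 : 0 < |d h| := abs_pos.2 hd'
    have heabs : |e h| ≤ |d h| * (|A| + |B|) := by
      calc |e h| ≤ |l ^ h * A| + |(h : ℝ) * l ^ h * B| := abs_add_le _ _
        _ = |l ^ h| * |A| + |d h| * |B| := by
            simp only [hdd, abs_mul, Nat.abs_cast]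
        _ ≤ |d h| * |A| + |d h| * |B| := by
            refine add_le_add ?_ le_rfl
            apply mul_le_mul_of_nonneg_right _ (abs_nonneg A)
            rw [hdabs, abs_pow]
            nlinarith [pow_nonneg (abs_nonneg l) h]
        _ = |d h| * (|A| + |B|) := by ring
    have hrem : |N h - α * spow C (α - 1) * e h| ≤ (1 + 2 * α) * |e h| ^ α := by
      have heq : N h - α * spow C (α - 1) * e h
          = |e h| ^ α + (|C| ^ α - |C - e h| ^ α - α * spow C (α - 1) * e h) := by
        simp only [hN]; ring
      rw [heq]
      calc |_ + _| ≤ |(|e h| ^ α)| + _ := abs_add_le _ _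
        _ ≤ |e h| ^ α + 2 * α * |e h| ^ α := by
            apply add_le_add _ (abs_rpow_taylor hα1 hα2 C (e h))
            rw [abs_of_nonneg (Real.rpow_nonneg (abs_nonneg _) α)]
        _ = (1 + 2 * α) * |e h| ^ α := by ring
    have heα : |e h| ^ α ≤ |d h| ^ α * (|A| + |B|) ^ α := by
      rw [← Real.mul_rpow (abs_nonneg _) (by positivity)]
      exact Real.rpow_le_rpow (abs_nonneg _) heabs (by linarith)
    rw [Real.norm_eq_abs, abs_div, div_le_iff₀ hd0]
    calc |N h - α * spow C (α - 1) * e h| ≤ (1 + 2 * α) * (|d h| ^ α * (|A| + |B|) ^ α) := by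
          refine hrem.trans (mul_le_mul_of_nonneg_left heα (by linarith))
      _ = (1 + 2 * α) * (|A| + |B|) ^ α * |d h| ^ (α - 1) * |d h| := by
          rw [Real.rpow_sub_one (ne_of_gt hd0)]
          field_simp
      _ = (1 + 2 * α) * (|A| + |B|) ^ α * ((h : ℝ) * |l| ^ h) ^ (α - 1) * |d h| := by
          rw [hdabs]
  -- combine
  have Tsum := T1.add T2
  rw [add_zero] at Tsum
  apply Tsum.congr'
  filter_upwards [eventually_ge_atTop 1] with h hh
  have hd' := hd h hh
  have heq : e h / d h = A / (h : ℝ) + B := by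
    have hh0 : (h : ℝ) ≠ 0 := by
      have : (0:ℝ) < (h : ℝ) := by exact_mod_cast hh
      exact ne_of_gt this
    field_simp [hdd, he]
    ring
  have : N h / d h = α * spow C (α - 1) * (e h / d h)
      + (N h - α * spow C (α - 1) * e h) / d h := by
    field_simp
    ring
  rw [← heq]
  exact this.symm

lemma continuous_abs_rpow {p : ℝ} (hp : 0 ≤ p) : Continuous fun x : ℝ => |x| ^ p := by
  rw [continuous_iff_continuousAt]
  intro x
  exact (Real.continuousAt_rpow_const |x| p (Or.inr hp)).comp continuous_abs.continuousAt

lemma measurable_sign' : Measurable Real.sign := by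
  have : Real.sign = fun r : ℝ => if r < 0 then (-1 : ℝ) else if 0 < r then 1 else 0 := rfl
  rw [this]
  exact Measurable.ite (measurableSet_lt measurable_id measurable_const) measurable_const
    (Measurable.ite (measurableSet_lt measurable_const measurable_id) measurable_const
      measurable_const)

lemma measurable_spow {p : ℝ} (hp : 0 ≤ p) : Measurable fun x : ℝ => spow x p :=
  ((continuous_abs_rpow hp).measurable).mul measurable_sign'

lemma continuous_A2 (a1 a2 a3 a4 l : ℝ) (j : ℕ) : Continuous (A2 a1 a2 a3 a4 l j) := by
  unfold A2; fun_prop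

lemma continuous_B2 (a1 a2 a3 a4 l : ℝ) (j : ℕ) : Continuous (B2 a1 a2 a3 a4 l j) := by
  unfold B2; fun_prop

lemma continuous_C2 (a1 a2 a3 a4 l : ℝ) (j : ℕ) : Continuous (C2 a1 a2 a3 a4 l j) := by
  unfold C2; fun_prop

lemma sum_bound {j Q r k1 k2 K : ℝ} (hj : 0 ≤ j) (hQ : 0 < Q) (hr : 0 < r) (hr1 : r < 1)
    (hk1 : 0 ≤ k1) (hk2 : 0 ≤ k2) (hK : k1 + k2 + 2 ≤ K) :
    j * Q * k1 + j * (Q * r) + Q * r + j * Q * k2 ≤ (j + 1) * K * Q := by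
  nlinarith [mul_nonneg (mul_nonneg (by linarith : (0:ℝ) ≤ j + 1) (by linarith : (0:ℝ) ≤ 2 - r))
    hQ.le, mul_nonneg (mul_nonneg hj hQ.le) hk1, mul_nonneg (mul_nonneg hj hQ.le) hk2,
    mul_nonneg hj hQ.le, mul_nonneg hQ.le (by linarith : (0:ℝ) ≤ K - k1 - k2 - 2),
    mul_nonneg (mul_nonneg hj hQ.le) (by linarith : (0:ℝ) ≤ K - k1 - k2 - 2)]

lemma sphere_coord_bound (s : Sphere2) : |s.1.1| ≤ 1 ∧ |s.1.2| ≤ 1 := by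
  have h := s.2
  constructor <;> nlinarith [sq_abs s.1.1, sq_abs s.1.2, abs_nonneg s.1.1, abs_nonneg s.1.2,
    sq_nonneg s.1.1, sq_nonneg s.1.2]

lemma abs_comb4 (w x y z : ℝ) : |w - x + y + z| ≤ |w| + |x| + |y| + |z| :=
  abs_le.2 ⟨by linarith [neg_abs_le w, le_abs_self x, neg_abs_le y, neg_abs_le z],
    by linarith [le_abs_self w, neg_abs_le x, le_abs_self y, le_abs_self z]⟩

lemma abs_comb4' (w x y z : ℝ) : |w + x - y + z| ≤ |w| + |x| + |y| + |z| :=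
  abs_le.2 ⟨by linarith [neg_abs_le w, neg_abs_le x, le_abs_self y, neg_abs_le z],
    by linarith [le_abs_self w, le_abs_self x, neg_abs_le y, le_abs_self z]⟩

lemma abs_comb3 (w x y : ℝ) : |w - x + y| ≤ |w| + |x| + |y| :=
  abs_le.2 ⟨by linarith [neg_abs_le w, le_abs_self x, neg_abs_le y],
    by linarith [le_abs_self w, neg_abs_le x, le_abs_self y]⟩

lemma ABC_bounds (a1 a2 a3 a4 l : ℝ) (hl : l ≠ 0) (hr1 : |l| < 1) (j : ℕ) (s : Sphere2) :
    |A2 a1 a2 a3 a4 l j s| ≤ ((j:ℝ) + 1) * (|a1| + |a2| + |a3| + |a4| + 2) * |l| ^ j / |l|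
    ∧ |B2 a1 a2 a3 a4 l j s| ≤ ((j:ℝ) + 1) * (|a1| + |a2| + |a3| + |a4| + 2) * |l| ^ j / |l|
    ∧ |C2 a1 a2 a3 a4 l j s| ≤ ((j:ℝ) + 1) * (|a1| + |a2| + |a3| + |a4| + 2) * |l| ^ j / |l| := by
  set r := |l| with hrdef
  have hr : 0 < r := abs_pos.2 hl
  set K := |a1| + |a2| + |a3| + |a4| + 2 with hKdef
  set Q := r ^ j / r with hQdef
  have hQ : 0 < Q := by positivity
  have hrj : r ^ j = Q * r := by rw [hQdef, div_mul_cancel₀ _ hr.ne']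
  obtain ⟨hs1, hs2⟩ := sphere_coord_bound s
  have hzp : |l ^ ((j : ℤ) - 1)| = Q := by
    rw [zpow_sub_one₀ hl, zpow_natCast, abs_mul, abs_inv, abs_pow, hQdef, div_eq_mul_inv]
  have hlj : |l ^ j| = Q * r := by rw [abs_pow, hrj]
  have hjnn : (0:ℝ) ≤ (j : ℝ) := Nat.cast_nonneg j
  have hKpos : 0 < K := by rw [hKdef]; positivity
  have hgoal : ((j:ℝ) + 1) * K * r ^ j / r = ((j:ℝ) + 1) * K * Q := by
    rw [hQdef]; ring
  have ht1 : ∀ c : ℝ, |(j:ℝ) * l ^ ((j : ℤ) - 1) * c * s.1.1| ≤ (j:ℝ) * Q * |c| := by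
    intro c
    rw [abs_mul, abs_mul, abs_mul, Nat.abs_cast, hzp]
    calc (j:ℝ) * Q * |c| * |s.1.1| ≤ (j:ℝ) * Q * |c| * 1 := by
          apply mul_le_mul_of_nonneg_left hs1; positivity
      _ = (j:ℝ) * Q * |c| := mul_one _
  have ht1' : ∀ c : ℝ, |(j:ℝ) * l ^ ((j : ℤ) - 1) * c * s.1.2| ≤ (j:ℝ) * Q * |c| := by
    intro c
    rw [abs_mul, abs_mul, abs_mul, Nat.abs_cast, hzp]
    calc (j:ℝ) * Q * |c| * |s.1.2| ≤ (j:ℝ) * Q * |c| * 1 := by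
          apply mul_le_mul_of_nonneg_left hs2; positivity
      _ = (j:ℝ) * Q * |c| := mul_one _
  have ht2 : ∀ u : ℝ, |u| ≤ 1 → |(j:ℝ) * l ^ j * u| ≤ (j:ℝ) * (Q * r) := by
    intro u hu
    rw [abs_mul, abs_mul, Nat.abs_cast, hlj]
    calc (j:ℝ) * (Q * r) * |u| ≤ (j:ℝ) * (Q * r) * 1 := by
          apply mul_le_mul_of_nonneg_left hu; positivity
      _ = (j:ℝ) * (Q * r) := mul_one _
  have ht3 : ∀ u : ℝ, |u| ≤ 1 → |l ^ j * u| ≤ Q * r := by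
    intro u hu
    rw [abs_mul, hlj]
    calc Q * r * |u| ≤ Q * r * 1 := by
          apply mul_le_mul_of_nonneg_left hu; positivity
      _ = Q * r := mul_one _
  have htB : ∀ c u : ℝ, |u| ≤ 1 → |l ^ ((j : ℤ) - 1) * c * u| ≤ Q * |c| := by
    intro c u hu
    rw [abs_mul, abs_mul, hzp]
    calc Q * |c| * |u| ≤ Q * |c| * 1 := by
          apply mul_le_mul_of_nonneg_left hu; positivity
      _ = Q * |c| := mul_one _
  refine ⟨?_, ?_, ?_⟩
  · rw [hgoal]
    unfold A2
    refine (abs_comb4 _ _ _ _).trans ?_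
    have hsum := sum_bound hjnn hQ hr hr1 (abs_nonneg a1) (abs_nonneg a2)
      (by rw [hKdef]; linarith [abs_nonneg a3, abs_nonneg a4] : |a1| + |a2| + 2 ≤ K)
    linarith [ht1 a1, ht2 s.1.1 hs1, ht3 s.1.1 hs1, ht1' a2]
  · rw [hgoal]
    unfold B2
    refine (abs_comb3 _ _ _).trans ?_
    have h5 : |a1| + r + |a2| ≤ K := by
      rw [hKdef]; linarith [abs_nonneg a3, abs_nonneg a4]
    have h6 := mul_le_mul_of_nonneg_left h5 hQ.le
    have h7 : 0 ≤ (j:ℝ) * (K * Q) := by positivity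
    have := htB a1 s.1.1 hs1
    have := ht3 s.1.1 hs1
    have := htB a2 s.1.2 hs2
    nlinarith
  · rw [hgoal]
    unfold C2
    refine (abs_comb4' _ _ _ _).trans ?_
    have hsum := sum_bound hjnn hQ hr hr1 (abs_nonneg a3) (abs_nonneg a4)
      (by rw [hKdef]; linarith [abs_nonneg a1, abs_nonneg a2] : |a3| + |a4| + 2 ≤ K)
    linarith [ht1 a3, ht1' a4, ht2 s.1.2 hs2, ht3 s.1.2 hs2]


theorem CD_neg_asymptotic_case_III
    (Γ : Measure Sphere2) [IsFiniteMeasure Γ]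
    (α a1 a2 a3 a4 l : ℝ) (hα1 : 1 < α) (hα2 : α < 2)
    (hl : l ^ 2 - (a1 + a4) * l + (a1 * a4 - a2 * a3) = 0)
    (hdisc : (a1 - a4) ^ 2 = -(4 * a2 * a3)) (habs : |l| < 1)
    (hl0 : 0 < |l|) :
    Tendsto (fun h : ℕ => CDneg' Γ α a1 a2 a3 a4 l h / ((h : ℝ) * l ^ h)) atTop
      (𝓝 (α * D3 Γ α a1 a2 a3 a4 l)) := by
  have hlne : l ≠ 0 := abs_pos.1 hl0
  have hr : (0:ℝ) < |l| := hl0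
  have hα0 : (0:ℝ) ≤ α := by linarith
  set r : ℝ := |l| with hrdef
  set K : ℝ := |a1| + |a2| + |a3| + |a4| + 2 with hKdef
  have hKpos : 0 < K := by positivity
  set P : ℕ → ℝ := fun j => ((j:ℝ) + 1) * K * r ^ j / r with hPdef
  have hPpos : ∀ j, 0 < P j := fun j => by
    simp only [hPdef]; positivity
  -- a uniform bound M1 on ((h:ℝ) * r ^ h) ^ (α - 1)
  have hM0 : Tendsto (fun h : ℕ => ((h:ℝ) * r ^ h) ^ (α - 1)) atTop (𝓝 0) := by
    have h1 : Tendsto (fun h : ℕ => (h : ℝ) * r ^ h) atTop (𝓝 0) := by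
      have := tendsto_pow_const_mul_const_pow_of_lt_one 1 hr.le habs
      simpa using this
    have h2 : Tendsto (fun x : ℝ => x ^ (α - 1)) (𝓝 0) (𝓝 0) := by
      have h3 := (Real.continuousAt_rpow_const 0 (α - 1) (Or.inr (by linarith))).tendsto
      rwa [Real.zero_rpow (by linarith : α - 1 ≠ 0)] at h3
    exact h2.comp h1
  obtain ⟨M1, hM1mem⟩ := hM0.bddAbove_range
  have hM1 : ∀ h : ℕ, ((h:ℝ) * r ^ h) ^ (α - 1) ≤ M1 := fun h => hM1mem ⟨h, rfl⟩
  have hM1nn : 0 ≤ M1 := le_trans (Real.rpow_nonneg (by positivity) _) (hM1 0)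
  set bnd : ℕ → ℝ := fun j =>
    α * (P j) ^ (α - 1) * (2 * P j) + (1 + 2 * α) * M1 * (2 * P j) ^ α with hbnddef
  have hbnd_nn : ∀ j, 0 ≤ bnd j := fun j => by
    have h0 := hPpos j
    have h1 : (0:ℝ) ≤ (P j) ^ (α - 1) := Real.rpow_nonneg (hPpos j).le _
    have h2 : (0:ℝ) ≤ (2 * P j) ^ α := Real.rpow_nonneg (by positivity) _
    simp only [hbnddef]
    nlinarith [mul_nonneg (mul_nonneg hα0 h1) (by linarith : (0:ℝ) ≤ 2 * P j),
      mul_nonneg (mul_nonneg (by linarith : (0:ℝ) ≤ 1 + 2 * α) hM1nn) h2]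
  set ΓU : ℝ := (Γ Set.univ).toReal with hΓU
  have hΓUnn : 0 ≤ ΓU := ENNReal.toReal_nonneg
  set bound : ℕ → ℝ := fun j => bnd j * ΓU with hbounddef
  -- Summability of the bound
  have hSum : Summable bound := by
    set ρ : ℝ := r ^ α with hρdef
    have hρpos : 0 < ρ := Real.rpow_pos_of_pos hr α
    have hρ1 : ρ < 1 := by
      have := Real.rpow_le_rpow_of_exponent_ge hr habs.le (by linarith : (1:ℝ) ≤ α)
      rw [Real.rpow_one] at this
      linarith
    have hρn : ‖ρ‖ < 1 := by rw [Real.norm_eq_abs, abs_of_pos hρpos]; exact hρ1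
    have s2 := summable_pow_mul_geometric_of_norm_lt_one (R := ℝ) 2 hρn
    have s1 := summable_pow_mul_geometric_of_norm_lt_one (R := ℝ) 1 hρn
    have s0 := summable_geometric_of_lt_one hρpos.le hρ1
    have Sgeo : Summable (fun j : ℕ => ((j:ℝ) + 1) ^ 2 * ρ ^ j) := by
      refine ((s2.add (s1.mul_left 2)).add s0).congr (fun j => ?_)
      push_cast
      ring
    have hPα : ∀ j, (P j) ^ α = (K / r) ^ α * (((j:ℝ) + 1) ^ α * ρ ^ j) := by
      intro j
      have hPj : P j = (K / r) * (((j:ℝ) + 1) * r ^ j) := by simp only [hPdef]; ring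
      rw [hPj, Real.mul_rpow (by positivity) (by positivity),
        Real.mul_rpow (by positivity) (pow_nonneg hr.le j)]
      congr 1
      rw [← Real.rpow_natCast r j, ← Real.rpow_mul hr.le, mul_comm ((j:ℕ):ℝ) α,
        Real.rpow_mul hr.le, Real.rpow_natCast]
    have hle : ∀ j, (P j) ^ α ≤ (K / r) ^ α * (((j:ℝ) + 1) ^ 2 * ρ ^ j) := by
      intro j
      rw [hPα j]
      have h1 : ((j:ℝ) + 1) ^ α ≤ ((j:ℝ) + 1) ^ (2:ℕ) := by
        rw [← Real.rpow_natCast ((j:ℝ) + 1) 2]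
        exact Real.rpow_le_rpow_of_exponent_le
          (by linarith [Nat.cast_nonneg (α := ℝ) j] : (1:ℝ) ≤ (j:ℝ) + 1)
          (by push_cast; linarith)
      have h2 : (0:ℝ) ≤ ρ ^ j := pow_nonneg hρpos.le j
      have h3 : (0:ℝ) ≤ (K / r) ^ α := Real.rpow_nonneg (by positivity) α
      have := mul_le_mul_of_nonneg_right h1 h2
      nlinarith
    have SP : Summable (fun j => (P j) ^ α) :=
      Summable.of_nonneg_of_le (fun j => Real.rpow_nonneg (hPpos j).le α) hle
        (Sgeo.mul_left _)
    have hbnd_eq : ∀ j, bnd j = (2 * α + (1 + 2 * α) * M1 * (2:ℝ) ^ α) * (P j) ^ α := by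
      intro j
      have h1 : (P j) ^ (α - 1) * (P j) = (P j) ^ α := by
        rw [← Real.rpow_add_one (ne_of_gt (hPpos j)) (α - 1)]
        ring_nf
      have h2 : (2 * P j) ^ α = (2:ℝ) ^ α * (P j) ^ α :=
        Real.mul_rpow (by norm_num) (hPpos j).le
      simp only [hbnddef]
      rw [h2]
      linear_combination (2 * α) * h1
    refine ((SP.mul_left (2 * α + (1 + 2 * α) * M1 * (2:ℝ) ^ α)).mul_right ΓU).congr
      (fun j => ?_)
    simp only [hbounddef]
    rw [hbnd_eq j]
  -- the rescaled integrands: measurability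
  have hm1 : Measurable (fun s : Sphere2 => (s : ℝ × ℝ).1) :=
    measurable_fst.comp measurable_subtype_coe
  have hm2 : Measurable (fun s : Sphere2 => (s : ℝ × ℝ).2) :=
    measurable_snd.comp measurable_subtype_coe
  have hmA : ∀ j : ℕ, Measurable (A2 a1 a2 a3 a4 l j) := by
    intro j
    unfold A2
    fun_prop
  have hmB : ∀ j : ℕ, Measurable (B2 a1 a2 a3 a4 l j) := by
    intro j
    unfold B2
    fun_prop
  have hmC : ∀ j : ℕ, Measurable (C2 a1 a2 a3 a4 l j) := by
    intro j
    unfold C2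
    fun_prop
  have hGcont : ∀ h j : ℕ, Measurable (fun s : Sphere2 =>
      (|l ^ h * A2 a1 a2 a3 a4 l j s + (h:ℝ) * l ^ h * B2 a1 a2 a3 a4 l j s| ^ α
        + |C2 a1 a2 a3 a4 l j s| ^ α
        - |C2 a1 a2 a3 a4 l j s -
            (l ^ h * A2 a1 a2 a3 a4 l j s + (h:ℝ) * l ^ h * B2 a1 a2 a3 a4 l j s)| ^ α)
      / ((h:ℝ) * l ^ h)) := by
    intro h j
    have hce : Measurable (fun s : Sphere2 =>
        l ^ h * A2 a1 a2 a3 a4 l j s + (h:ℝ) * l ^ h * B2 a1 a2 a3 a4 l j s) :=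
      (measurable_const.mul (hmA j)).add (measurable_const.mul (hmB j))
    have hrp := (continuous_abs_rpow hα0).measurable
    exact (((hrp.comp hce).add (hrp.comp (hmC j))).sub
      (hrp.comp ((hmC j).sub hce))).div_const _
  have hGbound : ∀ h j : ℕ, 1 ≤ h → ∀ s : Sphere2,
      |(|l ^ h * A2 a1 a2 a3 a4 l j s + (h:ℝ) * l ^ h * B2 a1 a2 a3 a4 l j s| ^ α
        + |C2 a1 a2 a3 a4 l j s| ^ α
        - |C2 a1 a2 a3 a4 l j s -
            (l ^ h * A2 a1 a2 a3 a4 l j s + (h:ℝ) * l ^ h * B2 a1 a2 a3 a4 l j s)| ^ α)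
      / ((h:ℝ) * l ^ h)| ≤ bnd j := by
    intro h j hh s
    obtain ⟨hA, hB, hC⟩ := ABC_bounds a1 a2 a3 a4 l hlne habs j s
    exact key_est hα1 hα2 hlne _ _ _ (P j) M1 hA hB hC (hPpos j) h hh (hM1 h)
  have hGbound' : ∀ h j : ℕ, ∀ s : Sphere2,
      |(|l ^ h * A2 a1 a2 a3 a4 l j s + (h:ℝ) * l ^ h * B2 a1 a2 a3 a4 l j s| ^ α
        + |C2 a1 a2 a3 a4 l j s| ^ α
        - |C2 a1 a2 a3 a4 l j s -
            (l ^ h * A2 a1 a2 a3 a4 l j s + (h:ℝ) * l ^ h * B2 a1 a2 a3 a4 l j s)| ^ α)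
      / ((h:ℝ) * l ^ h)| ≤ bnd j := by
    intro h j s
    rcases Nat.eq_zero_or_pos h with rfl | hh
    · simpa using hbnd_nn j
    · exact hGbound h j hh s
  -- per-j limit of the integrals
  have hab : ∀ j : ℕ, Tendsto (fun h : ℕ => ∫ s,
      (|l ^ h * A2 a1 a2 a3 a4 l j s + (h:ℝ) * l ^ h * B2 a1 a2 a3 a4 l j s| ^ α
        + |C2 a1 a2 a3 a4 l j s| ^ α
        - |C2 a1 a2 a3 a4 l j s -
            (l ^ h * A2 a1 a2 a3 a4 l j s + (h:ℝ) * l ^ h * B2 a1 a2 a3 a4 l j s)| ^ α)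
      / ((h:ℝ) * l ^ h) ∂Γ) atTop
      (𝓝 (α * ∫ s, B2 a1 a2 a3 a4 l j s * spow (C2 a1 a2 a3 a4 l j s) (α - 1) ∂Γ)) := by
    intro j
    have hmeas := fun h => (hGcont h j).aestronglyMeasurable (μ := Γ)
    have hbint : Integrable (fun _ : Sphere2 => bnd j) Γ := integrable_const _
    have hbd : ∀ h : ℕ, ∀ᵐ s ∂Γ, ‖(|l ^ h * A2 a1 a2 a3 a4 l j s + (h:ℝ) * l ^ h * B2 a1 a2 a3 a4 l j s| ^ α
        + |C2 a1 a2 a3 a4 l j s| ^ α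
        - |C2 a1 a2 a3 a4 l j s -
            (l ^ h * A2 a1 a2 a3 a4 l j s + (h:ℝ) * l ^ h * B2 a1 a2 a3 a4 l j s)| ^ α)
      / ((h:ℝ) * l ^ h)‖ ≤ bnd j := fun h =>
      Eventually.of_forall (fun s => by rw [Real.norm_eq_abs]; exact hGbound' h j s)
    have hlim : ∀ᵐ s ∂Γ, Tendsto (fun h : ℕ =>
        (|l ^ h * A2 a1 a2 a3 a4 l j s + (h:ℝ) * l ^ h * B2 a1 a2 a3 a4 l j s| ^ α
          + |C2 a1 a2 a3 a4 l j s| ^ α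
          - |C2 a1 a2 a3 a4 l j s -
              (l ^ h * A2 a1 a2 a3 a4 l j s + (h:ℝ) * l ^ h * B2 a1 a2 a3 a4 l j s)| ^ α)
        / ((h:ℝ) * l ^ h)) atTop
        (𝓝 (α * spow (C2 a1 a2 a3 a4 l j s) (α - 1) * B2 a1 a2 a3 a4 l j s)) :=
      Eventually.of_forall (fun s => key_tendsto hα1 hα2 hlne habs _ _ _)
    have hDCT := tendsto_integral_of_dominated_convergence _ hmeas hbint hbd hlim
    have heqi : (∫ s, α * spow (C2 a1 a2 a3 a4 l j s) (α - 1) * B2 a1 a2 a3 a4 l j s ∂Γ)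
        = α * ∫ s, B2 a1 a2 a3 a4 l j s * spow (C2 a1 a2 a3 a4 l j s) (α - 1) ∂Γ := by
      rw [← integral_const_mul]
      exact integral_congr_ae (Eventually.of_forall (fun s => by ring))
    rwa [heqi] at hDCT
  -- the eventual bound on the integrals
  have h_bound : ∀ᶠ h : ℕ in atTop, ∀ j : ℕ, ‖∫ s,
      (|l ^ h * A2 a1 a2 a3 a4 l j s + (h:ℝ) * l ^ h * B2 a1 a2 a3 a4 l j s| ^ α
        + |C2 a1 a2 a3 a4 l j s| ^ α
        - |C2 a1 a2 a3 a4 l j s -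
            (l ^ h * A2 a1 a2 a3 a4 l j s + (h:ℝ) * l ^ h * B2 a1 a2 a3 a4 l j s)| ^ α)
      / ((h:ℝ) * l ^ h) ∂Γ‖ ≤ bound j := by
    filter_upwards [eventually_ge_atTop 1] with h hh
    intro j
    exact norm_integral_le_of_norm_le_const
      (Eventually.of_forall (fun s => by rw [Real.norm_eq_abs]; exact hGbound h j hh s))
  have main := tendsto_tsum_of_dominated_convergence hSum hab h_bound
  have heq : ∀ h : ℕ, CDneg' Γ α a1 a2 a3 a4 l h / ((h:ℝ) * l ^ h) = ∑' j : ℕ, ∫ s,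
      (|l ^ h * A2 a1 a2 a3 a4 l j s + (h:ℝ) * l ^ h * B2 a1 a2 a3 a4 l j s| ^ α
        + |C2 a1 a2 a3 a4 l j s| ^ α
        - |C2 a1 a2 a3 a4 l j s -
            (l ^ h * A2 a1 a2 a3 a4 l j s + (h:ℝ) * l ^ h * B2 a1 a2 a3 a4 l j s)| ^ α)
      / ((h:ℝ) * l ^ h) ∂Γ := by
    intro h
    simp only [CDneg']
    rw [← tsum_div_const]
    congr 1
    funext j
    exact (integral_div ((h:ℝ) * l ^ h) _).symm
  have hlim_eq : (∑' j : ℕ, α * ∫ s,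
      B2 a1 a2 a3 a4 l j s * spow (C2 a1 a2 a3 a4 l j s) (α - 1) ∂Γ)
      = α * D3 Γ α a1 a2 a3 a4 l := by
    rw [D3, tsum_mul_left]
  rw [← hlim_eq]
  exact main.congr (fun h => (heq h).symm)
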